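/- In the symmetric quadratic-equation setup, it holds that inf over Q_0 ∈ ℝ^{d×r} with ‖Q_0‖_max = 1 of ‖Q_0L̄_1 − L̄_2Q_0‖_max is at least |λ_r| − 3rμ(τ + rκ) − ε. Moreover, if |λ_r| > κ·r·√μ, then L̄_1 is an invertible r×r matrix. -/

import Mathlib

open Matrix BigOperators

/-- Entrywise max norm: largest absolute value of an entry. -/
noncomputable def matMaxNorm {m n : Type*} [Fintype m] [Fintype n] (M : Matrix m n ℝ) : ℝ :=
  ⨆ i, ⨆ j, |M i j|

/-- Matrix ∞-norm: maximum absolute row sum. -/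
noncomputable def matInfNorm {m n : Type*} [Fintype m] [Fintype n] (M : Matrix m n ℝ) : ℝ :=
  ⨆ i, ∑ j, |M i j|

/-- Matrix 1-norm: maximum absolute column sum. -/
noncomputable def matOneNorm {m n : Type*} [Fintype m] [Fintype n] (M : Matrix m n ℝ) : ℝ :=
  ⨆ j, ∑ i, |M i j|

/-- Euclidean norm of a vector. -/
noncomputable def vec2Norm {n : Type*} [Fintype n] (x : n → ℝ) : ℝ :=
  Real.sqrt (∑ i, (x i) ^ 2)

/-- ℓ∞ norm of a vector. -/
noncomputable def vecSupNorm {n : Type*} [Fintype n] (x : n → ℝ) : ℝ :=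
  ⨆ i, |x i|

/-- Spectral norm (operator 2-norm) of a matrix. -/
noncomputable def matSpecNorm {m n : Type*} [Fintype m] [Fintype n] (M : Matrix m n ℝ) : ℝ :=
  sSup {c : ℝ | ∃ x : n → ℝ, vec2Norm x ≤ 1 ∧ c = vec2Norm (M.mulVec x)}

/-- Coherence of a d × r matrix with orthonormal columns. -/
noncomputable def matCoherence {d r : ℕ} (V : Matrix (Fin d) (Fin r) ℝ) : ℝ :=
  ((d : ℝ) / (r : ℝ)) * ⨆ i, ∑ j, (V i j) ^ 2

/-- Inverse of the positive semidefinite square root of a matrix (junk value otherwise). -/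
noncomputable def matInvSqrt {n : Type*} [Fintype n] [DecidableEq n] (S : Matrix n n ℝ) :
    Matrix n n ℝ :=
  letI := Classical.propDecidable
  if h : S.PosSemidef then
    (h.1.eigenvectorUnitary.1 * diagonal ((↑) ∘ Real.sqrt ∘ h.1.eigenvalues) *
      (star h.1.eigenvectorUnitary : Matrix n n ℝ))⁻¹ else 0

/-- Weighted max-norm for matrices with d₁ + d₂ rows. -/
noncomputable def wMaxNorm {d₁ d₂ : ℕ} {n : Type*} [Fintype n]
    (M : Matrix (Fin d₁ ⊕ Fin d₂) n ℝ) : ℝ :=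
  matMaxNorm (Matrix.of fun i j =>
    (Sum.elim (fun _ : Fin d₁ => Real.sqrt d₁) (fun _ : Fin d₂ => Real.sqrt d₂) i) * M i j)

/-- Huber loss with parameter α. -/
noncomputable def huberLoss (α x : ℝ) : ℝ := if |x| ≤ α then x ^ 2 else 2 * α * |x| - α ^ 2

/-! With P = VVᵀ, the spectral decomposition of A gives L̄₂ = (A − A_r) + (1 − P)E(1 − P), so
Q₀L̄₁ − L̄₂Q₀ = Q₀Λ₁ − R with R = (A − A_r)Q₀ + (1 − P)E(1 − P)Q₀ − Q₀E₁₁. At an entry where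
|Q₀ᵢⱼ| = 1 the term Q₀Λ₁ has modulus |λⱼ| ≥ |λ_r|. Expanding (1 − P)E(1 − P), every piece of R
is bounded through ‖XY‖_max ≤ ‖X‖_∞‖Y‖_max together with ‖P‖_∞ ≤ rμ, ‖Vᵀ‖_∞ ≤ √d,
‖V‖_∞√d ≤ r√μ (Cauchy–Schwarz on the rows of V) and ‖E₁₁‖_max ≤ κ.
Invertibility of L̄₁ = Λ₁ + E₁₁ is strict diagonal dominance, the rows of E₁₁ having absolute
sums at most rκ. -/

lemma abs_mul_apply_le {m n p : Type*} [Fintype n] (M : Matrix m n ℝ) (N : Matrix n p ℝ)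
    (i : m) (k : p) :
    |(M * N) i k| ≤ ∑ j, |M i j| * |N j k| := by
  simpa only [mul_apply, abs_mul] using Finset.abs_sum_le_sum_abs (fun j => M i j * N j k) _

section Norms

variable {m n p : Type*} [Fintype m] [Fintype n] [Fintype p]

lemma abs_apply_le_matMaxNorm (M : Matrix m n ℝ) (i : m) (j : n) : |M i j| ≤ matMaxNorm M :=
  (le_ciSup (Finite.bddAbove_range _) j).trans
    (le_ciSup (Finite.bddAbove_range fun i => ⨆ j, |M i j|) i)

lemma matMaxNorm_le {M : Matrix m n ℝ} {c : ℝ} (hc : 0 ≤ c) (h : ∀ i j, |M i j| ≤ c) :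
    matMaxNorm M ≤ c :=
  Real.iSup_le (fun i => Real.iSup_le (h i) hc) hc

lemma matMaxNorm_nonneg (M : Matrix m n ℝ) : 0 ≤ matMaxNorm M :=
  Real.iSup_nonneg fun _ => Real.iSup_nonneg fun _ => abs_nonneg _

lemma exists_abs_apply_eq_matMaxNorm {M : Matrix m n ℝ} (hM : matMaxNorm M ≠ 0) :
    ∃ i j, |M i j| = matMaxNorm M := by
  have : Nonempty m := by
    by_contra h
    simp only [not_nonempty_iff] at h
    exact hM (Real.iSup_of_isEmpty _)
  have : Nonempty n := by
    by_contra h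
    simp only [not_nonempty_iff] at h
    exact hM (by simp [matMaxNorm, Real.iSup_of_isEmpty])
  obtain ⟨i, j, hij⟩ : ∃ i j, ∀ a b, |M a b| ≤ |M i j| := by
    obtain ⟨⟨i, j⟩, h⟩ := Finite.exists_max fun x : m × n => |M x.1 x.2|
    exact ⟨i, j, fun a b => h (a, b)⟩
  exact ⟨i, j, le_antisymm (abs_apply_le_matMaxNorm M i j) (matMaxNorm_le (abs_nonneg _) hij)⟩

lemma matMaxNorm_add_le (M N : Matrix m n ℝ) : matMaxNorm (M + N) ≤ matMaxNorm M + matMaxNorm N :=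
  matMaxNorm_le (add_nonneg (matMaxNorm_nonneg M) (matMaxNorm_nonneg N)) fun i j =>
    (abs_add_le _ _).trans
      (add_le_add (abs_apply_le_matMaxNorm M i j) (abs_apply_le_matMaxNorm N i j))

lemma matMaxNorm_sub_le (M N : Matrix m n ℝ) : matMaxNorm (M - N) ≤ matMaxNorm M + matMaxNorm N :=
  matMaxNorm_le (add_nonneg (matMaxNorm_nonneg M) (matMaxNorm_nonneg N)) fun i j =>
    (abs_sub _ _).trans
      (add_le_add (abs_apply_le_matMaxNorm M i j) (abs_apply_le_matMaxNorm N i j))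

lemma sum_abs_apply_le_matInfNorm (M : Matrix m n ℝ) (i : m) : ∑ j, |M i j| ≤ matInfNorm M :=
  le_ciSup (Finite.bddAbove_range fun i => ∑ j, |M i j|) i

lemma matInfNorm_le {M : Matrix m n ℝ} {c : ℝ} (hc : 0 ≤ c) (h : ∀ i, ∑ j, |M i j| ≤ c) :
    matInfNorm M ≤ c :=
  Real.iSup_le h hc

lemma matInfNorm_nonneg (M : Matrix m n ℝ) : 0 ≤ matInfNorm M :=
  Real.iSup_nonneg fun _ => Finset.sum_nonneg fun _ _ => abs_nonneg _

lemma matInfNorm_le_card_mul_matMaxNorm (M : Matrix m n ℝ) :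
    matInfNorm M ≤ Fintype.card n * matMaxNorm M :=
  matInfNorm_le (by positivity [matMaxNorm_nonneg M]) fun i => by
    simpa using Finset.sum_le_sum fun j (_ : j ∈ Finset.univ) => abs_apply_le_matMaxNorm M i j

lemma matMaxNorm_mul_le (M : Matrix m n ℝ) (N : Matrix n p ℝ) :
    matMaxNorm (M * N) ≤ matInfNorm M * matMaxNorm N :=
  matMaxNorm_le (mul_nonneg (matInfNorm_nonneg M) (matMaxNorm_nonneg N)) fun i k =>
    calc |(M * N) i k| ≤ ∑ j, |M i j| * matMaxNorm N :=
          (abs_mul_apply_le M N i k).trans <| Finset.sum_le_sum fun j _ =>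
            mul_le_mul_of_nonneg_left (abs_apply_le_matMaxNorm N j k) (abs_nonneg _)
      _ ≤ matInfNorm M * matMaxNorm N := by
          rw [← Finset.sum_mul]
          exact mul_le_mul_of_nonneg_right (sum_abs_apply_le_matInfNorm M i) (matMaxNorm_nonneg N)

lemma matInfNorm_mul_le (M : Matrix m n ℝ) (N : Matrix n p ℝ) :
    matInfNorm (M * N) ≤ matInfNorm M * matInfNorm N :=
  matInfNorm_le (mul_nonneg (matInfNorm_nonneg M) (matInfNorm_nonneg N)) fun i =>
    calc ∑ k, |(M * N) i k| ≤ ∑ k, ∑ j, |M i j| * |N j k| :=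
          Finset.sum_le_sum fun k _ => abs_mul_apply_le M N i k
      _ = ∑ j, |M i j| * ∑ k, |N j k| := by
          rw [Finset.sum_comm]
          simp only [Finset.mul_sum]
      _ ≤ ∑ j, |M i j| * matInfNorm N := Finset.sum_le_sum fun j _ =>
          mul_le_mul_of_nonneg_left (sum_abs_apply_le_matInfNorm N j) (abs_nonneg _)
      _ ≤ matInfNorm M * matInfNorm N := by
          rw [← Finset.sum_mul]
          exact mul_le_mul_of_nonneg_right (sum_abs_apply_le_matInfNorm M i) (matInfNorm_nonneg N)

end Norms

section OrthonormalColumns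

lemma sum_sq_apply_eq_one_of_transpose_mul_self {m n : Type*} [Fintype m] [DecidableEq n]
    {V : Matrix m n ℝ} (hV : Vᵀ * V = 1) (k : n) : ∑ a, V a k ^ 2 = 1 := by
  simpa [mul_apply, sq] using congrFun (congrFun hV k) k

lemma matInfNorm_transpose_le_sqrt_card {m n : Type*} [Fintype m] [Fintype n] [DecidableEq n]
    {V : Matrix m n ℝ} (hV : Vᵀ * V = 1) : matInfNorm Vᵀ ≤ √(Fintype.card m) := by
  refine matInfNorm_le (Real.sqrt_nonneg _) fun k => (le_abs_self _).trans (Real.abs_le_sqrt ?_)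
  simpa [sum_sq_apply_eq_one_of_transpose_mul_self hV k] using
    sq_sum_le_card_mul_sum_sq (s := Finset.univ) (f := fun a => |V a k|)

variable {d r : ℕ} {V : Matrix (Fin d) (Fin r) ℝ}

lemma card_mul_sum_sq_le_matCoherence (hr : r ≠ 0) (a : Fin d) :
    d * ∑ k, V a k ^ 2 ≤ r * matCoherence V :=
  calc d * ∑ k, V a k ^ 2 ≤ d * ⨆ i, ∑ k, V i k ^ 2 := by
        gcongr
        exact le_ciSup (Finite.bddAbove_range fun i => ∑ k, V i k ^ 2) a
    _ = r * matCoherence V := by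
        rw [matCoherence]
        field_simp

lemma one_le_matCoherence (hV : Vᵀ * V = 1) (hr : r ≠ 0) : 1 ≤ matCoherence V := by
  have htotal : ∑ a, ∑ k, V a k ^ 2 = r := by
    rw [Finset.sum_comm]
    simp [sum_sq_apply_eq_one_of_transpose_mul_self hV]
  have hd : (0 : ℝ) < d := by
    rcases Nat.eq_zero_or_pos d with rfl | hd
    · simp only [Finset.univ_eq_empty, Finset.sum_empty] at htotal
      exact absurd htotal.symm (Nat.cast_ne_zero.mpr hr)
    · exact_mod_cast hd
  have hdr : (d * r : ℝ) * 1 ≤ (d * r : ℝ) * matCoherence V :=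
    calc (d * r : ℝ) * 1 = ∑ a, d * ∑ k, V a k ^ 2 := by rw [← Finset.mul_sum, htotal, mul_one]
      _ ≤ ∑ _a : Fin d, r * matCoherence V :=
          Finset.sum_le_sum fun a _ => card_mul_sum_sq_le_matCoherence hr a
      _ = (d * r : ℝ) * matCoherence V := by simp [mul_assoc]
  exact le_of_mul_le_mul_left hdr (by positivity)

lemma matInfNorm_mul_sqrt_le (hr : r ≠ 0) :
    matInfNorm V * √d ≤ r * √(matCoherence V) := by
  rw [matInfNorm, Real.iSup_mul_of_nonneg (Real.sqrt_nonneg _)]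
  refine Real.iSup_le (fun a => ?_) (by positivity)
  have hcs : (∑ k, |V a k|) ^ 2 ≤ r * ∑ k, V a k ^ 2 := by
    simpa using sq_sum_le_card_mul_sum_sq (s := Finset.univ) (f := fun k => |V a k|)
  have hrow := card_mul_sum_sq_le_matCoherence (V := V) hr a
  rw [← Real.sqrt_sq (Nat.cast_nonneg r), ← Real.sqrt_mul (sq_nonneg _)]
  refine (le_abs_self _).trans (Real.abs_le_sqrt ?_)
  rw [mul_pow, Real.sq_sqrt (Nat.cast_nonneg _)]
  nlinarith [Nat.cast_nonneg (α := ℝ) r, Nat.cast_nonneg (α := ℝ) d]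

lemma matInfNorm_mul_transpose_le (hV : Vᵀ * V = 1) (hr : r ≠ 0) :
    matInfNorm (V * Vᵀ) ≤ r * matCoherence V :=
  calc matInfNorm (V * Vᵀ) ≤ matInfNorm V * √d :=
        (matInfNorm_mul_le V Vᵀ).trans <| mul_le_mul_of_nonneg_left
          (by simpa using matInfNorm_transpose_le_sqrt_card hV) (matInfNorm_nonneg V)
    _ ≤ r * √(matCoherence V) := matInfNorm_mul_sqrt_le hr
    _ ≤ r * matCoherence V := by
        gcongr
        exact Real.sqrt_le_self_iff.mpr (Or.inr (one_le_matCoherence hV hr))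

end OrthonormalColumns

section Perturbation

variable {d r : ℕ} {V : Matrix (Fin d) (Fin r) ℝ}

lemma matMaxNorm_transpose_mul_le {n : Type*} [Fintype n] (hV : Vᵀ * V = 1)
    (M : Matrix (Fin d) n ℝ) : matMaxNorm (Vᵀ * M) ≤ √d * matMaxNorm M :=
  (matMaxNorm_mul_le Vᵀ M).trans <| mul_le_mul_of_nonneg_right
    (by simpa using matInfNorm_transpose_le_sqrt_card hV) (matMaxNorm_nonneg M)

lemma matMaxNorm_compress_le (hV : Vᵀ * V = 1) (E : Matrix (Fin d) (Fin d) ℝ) :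
    matMaxNorm (Vᵀ * E * V) ≤ √d * matMaxNorm (E * V) := by
  rw [Matrix.mul_assoc]
  exact matMaxNorm_transpose_mul_le hV (E * V)

lemma matInfNorm_compress_le (hV : Vᵀ * V = 1) (E : Matrix (Fin d) (Fin d) ℝ) :
    matInfNorm (Vᵀ * E * V) ≤ r * (√d * matMaxNorm (E * V)) := by
  simpa using (matInfNorm_le_card_mul_matMaxNorm (Vᵀ * E * V)).trans <|
    mul_le_mul_of_nonneg_left (matMaxNorm_compress_le hV E) (Nat.cast_nonneg _)

lemma matMaxNorm_compl_sandwich_le {n : Type*} [Fintype n] (hV : Vᵀ * V = 1) (hr : r ≠ 0)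
    (E : Matrix (Fin d) (Fin d) ℝ) (Q : Matrix (Fin d) n ℝ) :
    matMaxNorm ((1 - V * Vᵀ) * E * (1 - V * Vᵀ) * Q) ≤
      ((1 + 2 * (r * matCoherence V)) * matInfNorm E +
        r * √(matCoherence V) * (r * (√d * matMaxNorm (E * V)))) * matMaxNorm Q := by
  set P := V * Vᵀ
  set μ := matCoherence V
  set τ := matInfNorm E
  set q := matMaxNorm Q
  have hexpand : (1 - P) * E * (1 - P) * Q =
      E * Q - P * (E * Q) - E * (P * Q) + V * ((Vᵀ * E * V) * (Vᵀ * Q)) := by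
    simp only [P, Matrix.sub_mul, Matrix.mul_sub, Matrix.one_mul, Matrix.mul_one, Matrix.mul_assoc]
    abel
  have hP := matInfNorm_mul_transpose_le hV hr
  have hτ := matInfNorm_nonneg E
  have hq := matMaxNorm_nonneg Q
  have hEQ : matMaxNorm (E * Q) ≤ τ * q := matMaxNorm_mul_le E Q
  have hPEQ : matMaxNorm (P * (E * Q)) ≤ r * μ * (τ * q) :=
    (matMaxNorm_mul_le _ _).trans
      (mul_le_mul hP hEQ (matMaxNorm_nonneg _) ((matInfNorm_nonneg _).trans hP))
  have hEPQ : matMaxNorm (E * (P * Q)) ≤ τ * (r * μ * q) :=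
    (matMaxNorm_mul_le _ _).trans <| mul_le_mul_of_nonneg_left
      ((matMaxNorm_mul_le _ _).trans (mul_le_mul_of_nonneg_right hP hq)) hτ
  have hVEVQ : matMaxNorm (V * ((Vᵀ * E * V) * (Vᵀ * Q))) ≤
      r * √μ * (r * (√d * matMaxNorm (E * V))) * q :=
    calc _ ≤ matInfNorm V * (matInfNorm (Vᵀ * E * V) * (√d * q)) :=
          (matMaxNorm_mul_le _ _).trans <| mul_le_mul_of_nonneg_left
            ((matMaxNorm_mul_le _ _).trans <| mul_le_mul_of_nonneg_left
              (matMaxNorm_transpose_mul_le hV Q) (matInfNorm_nonneg _)) (matInfNorm_nonneg _)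
      _ = matInfNorm V * √d * (matInfNorm (Vᵀ * E * V) * q) := by ring
      _ ≤ r * √μ * (r * (√d * matMaxNorm (E * V))) * q := by
          rw [mul_assoc _ _ q]
          exact mul_le_mul (matInfNorm_mul_sqrt_le hr)
            (mul_le_mul_of_nonneg_right (matInfNorm_compress_le hV E) hq)
            (by positivity [matInfNorm_nonneg (Vᵀ * E * V)]) (by positivity)
  rw [hexpand]
  refine (matMaxNorm_add_le _ _).trans ?_
  linarith [matMaxNorm_sub_le (E * Q - P * (E * Q)) (E * (P * Q)),
    matMaxNorm_sub_le (E * Q) (P * (E * Q))]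

end Perturbation

lemma sub_matMaxNorm_le_matMaxNorm_mul_diagonal_sub {m n : Type*} [Fintype m] [Fintype n]
    [DecidableEq n] {Q : Matrix m n ℝ} (hQ : matMaxNorm Q = 1) {lam : n → ℝ} {ℓ : ℝ}
    (hℓ : ∀ k, ℓ ≤ |lam k|) (R : Matrix m n ℝ) :
    ℓ - matMaxNorm R ≤ matMaxNorm (Q * diagonal lam - R) := by
  obtain ⟨i, j, hij⟩ := exists_abs_apply_eq_matMaxNorm (hQ ▸ one_ne_zero)
  rw [hQ] at hij
  calc ℓ - matMaxNorm R ≤ |Q i j * lam j| - |R i j| := by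
        rw [abs_mul, hij, one_mul]
        linarith [hℓ j, abs_apply_le_matMaxNorm R i j]
    _ ≤ |(Q * diagonal lam - R) i j| := by
        rw [Matrix.sub_apply, mul_diagonal]
        exact abs_sub_abs_le_abs_sub _ _
    _ ≤ _ := abs_apply_le_matMaxNorm _ i j

lemma le_matMaxNorm_sylvester {d r : ℕ} {V : Matrix (Fin d) (Fin r) ℝ} (hV : Vᵀ * V = 1)
    (hr : r ≠ 0) {lam : Fin r → ℝ} {ℓ : ℝ} (hℓ : ∀ k, ℓ ≤ |lam k|) (E R : Matrix (Fin d) (Fin d) ℝ)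
    {Q : Matrix (Fin d) (Fin r) ℝ} (hQ : matMaxNorm Q = 1) :
    ℓ - 3 * r * matCoherence V * (matInfNorm E + r * (√d * matMaxNorm (E * V))) - matInfNorm R ≤
      matMaxNorm (Q * (diagonal lam + Vᵀ * E * V) -
        (R + (1 - V * Vᵀ) * E * (1 - V * Vᵀ)) * Q) := by
  set μ := matCoherence V
  set τ := matInfNorm E
  set κ := √d * matMaxNorm (E * V)
  set S := (1 - V * Vᵀ) * E * (1 - V * Vᵀ)
  have hsplit : Q * (diagonal lam + Vᵀ * E * V) - (R + S) * Q =
      Q * diagonal lam - (R * Q + S * Q - Q * (Vᵀ * E * V)) := by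
    rw [Matrix.mul_add, Matrix.add_mul]
    abel
  have hQE : matMaxNorm (Q * (Vᵀ * E * V)) ≤ r * κ := by
    have hQinf : matInfNorm Q ≤ r := by simpa [hQ] using matInfNorm_le_card_mul_matMaxNorm Q
    exact (matMaxNorm_mul_le _ _).trans
      (mul_le_mul hQinf (matMaxNorm_compress_le hV E) (matMaxNorm_nonneg _) (Nat.cast_nonneg _))
  have hRQ : matMaxNorm (R * Q) ≤ matInfNorm R := by simpa [hQ] using matMaxNorm_mul_le R Q
  have hSQ := matMaxNorm_compl_sandwich_le hV hr E Q
  rw [hQ, mul_one] at hSQ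
  have hrem := (matMaxNorm_sub_le _ _).trans
    (add_le_add ((matMaxNorm_add_le (R * Q) (S * Q)).trans (add_le_add hRQ hSQ)) hQE)
  have hμ := one_le_matCoherence hV hr
  have hsqrt : √μ ≤ μ := Real.sqrt_le_self_iff.mpr (Or.inr hμ)
  have hr1 : (1 : ℝ) ≤ r := Nat.one_le_cast.mpr (Nat.one_le_iff_ne_zero.mpr hr)
  have hκ : 0 ≤ κ := mul_nonneg (Real.sqrt_nonneg _) (matMaxNorm_nonneg _)
  have hτ : 0 ≤ τ := matInfNorm_nonneg E
  rw [hsplit]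
  refine le_trans ?_ (sub_matMaxNorm_le_matMaxNorm_mul_diagonal_sub hQ hℓ _)
  nlinarith [mul_le_mul_of_nonneg_left hsqrt (by positivity : (0 : ℝ) ≤ r * r * κ),
    mul_le_mul_of_nonneg_right (one_le_mul_of_one_le_of_one_le hr1 hμ) hτ,
    mul_le_mul_of_nonneg_right (one_le_mul_of_one_le_of_one_le hr1 hμ) (mul_nonneg
      (Nat.cast_nonneg (α := ℝ) r) hκ)]

lemma det_diagonal_add_ne_zero {n : Type*} [Fintype n] [DecidableEq n] {lam : n → ℝ}
    {F : Matrix n n ℝ} (h : ∀ k, ∑ j, |F k j| < |lam k|) : (diagonal lam + F).det ≠ 0 := by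
  refine det_ne_zero_of_sum_row_lt_diag fun k => ?_
  have hoff : ∑ j ∈ Finset.univ.erase k, ‖(diagonal lam + F) k j‖ =
      ∑ j ∈ Finset.univ.erase k, |F k j| :=
    Finset.sum_congr rfl fun j hj => by
      rw [Matrix.add_apply, diagonal_apply_ne _ (Finset.ne_of_mem_erase hj).symm, zero_add,
        Real.norm_eq_abs]
  have hdiag : |lam k| ≤ |lam k + F k k| + |F k k| := by
    simpa using abs_sub (lam k + F k k) (F k k)
  rw [hoff, Matrix.add_apply, diagonal_apply_eq, Real.norm_eq_abs]
  linarith [h k, Finset.add_sum_erase Finset.univ (fun j => |F k j|) (Finset.mem_univ k)]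

lemma isUnit_det_diagonal_add_compress {d r : ℕ} {V : Matrix (Fin d) (Fin r) ℝ}
    (hV : Vᵀ * V = 1) (hr : r ≠ 0) {lam : Fin r → ℝ} {ℓ : ℝ} (hℓ : ∀ k, ℓ ≤ |lam k|)
    (E : Matrix (Fin d) (Fin d) ℝ)
    (hlt : √d * matMaxNorm (E * V) * r * √(matCoherence V) < ℓ) :
    IsUnit (diagonal lam + Vᵀ * E * V).det := by
  have hκ : 0 ≤ √d * matMaxNorm (E * V) := mul_nonneg (Real.sqrt_nonneg _) (matMaxNorm_nonneg _)
  have hμ : 1 ≤ √(matCoherence V) := Real.one_le_sqrt.mpr (one_le_matCoherence hV hr)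
  refine isUnit_iff_ne_zero.mpr (det_diagonal_add_ne_zero fun k => ?_)
  calc ∑ j, |(Vᵀ * E * V) k j| ≤ r * (√d * matMaxNorm (E * V)) :=
        (sum_abs_apply_le_matInfNorm _ k).trans (matInfNorm_compress_le hV E)
    _ ≤ √d * matMaxNorm (E * V) * r * √(matCoherence V) := by
        nlinarith [mul_nonneg (mul_nonneg hκ (Nat.cast_nonneg (α := ℝ) r)) (sub_nonneg.mpr hμ)]
    _ < |lam k| := hlt.trans_le (hℓ k)

def Fin.natAddLE {r d : ℕ} (hrd : r ≤ d) (k : Fin (d - r)) : Fin d := ⟨r + k, by omega⟩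

theorem Fin.sum_univ_castLE_add_natAddLE {M : Type*} [AddCommMonoid M] {r d : ℕ} (hrd : r ≤ d)
    (f : Fin d → M) :
    ∑ i, f i = ∑ k : Fin r, f (Fin.castLE hrd k) + ∑ k : Fin (d - r), f (Fin.natAddLE hrd k) := by
  obtain ⟨m, rfl⟩ := Nat.exists_eq_add_of_le hrd
  rw [Fin.sum_univ_add, ← Fin.sum_congr' _ (Nat.add_sub_cancel_left r m)]
  rfl

lemma Matrix.mul_diagonal_mul_transpose_eq_castLE_add_natAddLE {m α : Type*} [Semiring α]
    {r d : ℕ} (hrd : r ≤ d) (W : Matrix m (Fin d) α) (g : Fin d → α) :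
    W * diagonal g * Wᵀ =
      W.submatrix id (Fin.castLE hrd) * diagonal (g ∘ Fin.castLE hrd) *
          (W.submatrix id (Fin.castLE hrd))ᵀ +
        W.submatrix id (Fin.natAddLE hrd) * diagonal (g ∘ Fin.natAddLE hrd) *
          (W.submatrix id (Fin.natAddLE hrd))ᵀ := by
  ext a b
  rw [Matrix.add_apply, mul_apply, mul_apply, mul_apply]
  simp only [mul_diagonal, submatrix_apply, transpose_apply, id, Function.comp_apply]
  exact Fin.sum_univ_castLE_add_natAddLE hrd fun j => W a j * g j * W b j

lemma Matrix.transpose_mul_submatrix_eq_one {m n l α : Type*} [Fintype m] [DecidableEq n]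
    [DecidableEq l] [Semiring α] {W : Matrix m n α} (hW : Wᵀ * W = 1) {e : l → n}
    (he : Function.Injective e) :
    (W.submatrix id e)ᵀ * W.submatrix id e = 1 := by
  rw [transpose_submatrix, ← submatrix_mul _ _ _ _ _ Function.bijective_id, hW, submatrix_one _ he]

lemma Matrix.eq_mul_diagonal_mul_transpose_of_mulVec_eq_smul {n R : Type*} [Fintype n]
    [DecidableEq n] [CommRing R] {A W : Matrix n n R} {lam : n → R}
    (heig : ∀ i, A *ᵥ Wᵀ i = lam i • Wᵀ i) (hW : Wᵀ * W = 1) :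
    A = W * diagonal lam * Wᵀ := by
  have hAW : A * W = W * diagonal lam := by
    ext a i
    rw [mul_diagonal]
    simpa [mul_apply, mulVec, dotProduct, mul_comm] using congrFun (heig i) a
  calc A = A * (W * Wᵀ) := by rw [mul_eq_one_comm.mp hW, Matrix.mul_one]
    _ = W * diagonal lam * Wᵀ := by rw [← Matrix.mul_assoc, hAW]

lemma Matrix.submatrix_natAddLE_mul_transpose {R : Type*} [CommRing R] {d r : ℕ} (hrd : r ≤ d)
    {W : Matrix (Fin d) (Fin d) R} (hW : Wᵀ * W = 1) :
    W.submatrix id (Fin.natAddLE hrd) * (W.submatrix id (Fin.natAddLE hrd))ᵀ =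
      1 - W.submatrix id (Fin.castLE hrd) * (W.submatrix id (Fin.castLE hrd))ᵀ := by
  have h := Matrix.mul_diagonal_mul_transpose_eq_castLE_add_natAddLE hrd W fun _ => 1
  simp only [Function.comp_def, diagonal_one, Matrix.mul_one, mul_eq_one_comm.mp hW] at h
  rw [h, add_sub_cancel_left]

lemma Matrix.sub_submatrix_castLE_eq_of_mulVec_eq_smul {R : Type*} [CommRing R] {d r : ℕ}
    (hrd : r ≤ d) {A W : Matrix (Fin d) (Fin d) R} {lam : Fin d → R}
    (heig : ∀ i, A *ᵥ Wᵀ i = lam i • Wᵀ i) (hW : Wᵀ * W = 1) :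
    A - W.submatrix id (Fin.castLE hrd) * diagonal (lam ∘ Fin.castLE hrd) *
        (W.submatrix id (Fin.castLE hrd))ᵀ =
      W.submatrix id (Fin.natAddLE hrd) * diagonal (lam ∘ Fin.natAddLE hrd) *
        (W.submatrix id (Fin.natAddLE hrd))ᵀ := by
  rw [Matrix.eq_mul_diagonal_mul_transpose_of_mulVec_eq_smul heig hW,
    Matrix.mul_diagonal_mul_transpose_eq_castLE_add_natAddLE hrd, add_sub_cancel_left]

/-- Lower bound for the linear operator Q₀ ↦ Q₀L̄₁ − L̄₂Q₀ in max-norm, and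
invertibility of L̄₁ (Lemma A.2 of Fan–Wang–Zhong). -/
theorem linear_operator_lower_bound
    (d r : ℕ) (hr : 0 < r) (hrd : r ≤ d)
    (A E : Matrix (Fin d) (Fin d) ℝ)
    (lam : Fin d → ℝ) (v : Fin d → Fin d → ℝ)
    (heig : ∀ i, A.mulVec (v i) = lam i • v i)
    (hon : ∀ i j, ∑ k, v i k * v j k = if i = j then (1 : ℝ) else 0)
    (hdec : ∀ i j : Fin d, i ≤ j → |lam j| ≤ |lam i|)
    (V : Matrix (Fin d) (Fin r) ℝ)
    (hV : V = Matrix.of fun a k => v (Fin.castLE hrd k) a)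
    (Vp : Matrix (Fin d) (Fin (d - r)) ℝ)
    (hVp : Vp = Matrix.of fun (a : Fin d) (k : Fin (d - r)) => v ⟨r + (k : ℕ), by have := k.isLt; omega⟩ a)
    (Lam₁ : Matrix (Fin r) (Fin r) ℝ)
    (hLam₁ : Lam₁ = Matrix.diagonal fun i => lam (Fin.castLE hrd i))
    (Lam₂ : Matrix (Fin (d - r)) (Fin (d - r)) ℝ)
    (hLam₂ : Lam₂ = Matrix.diagonal fun k : Fin (d - r) =>
      lam ⟨r + (k : ℕ), by have := k.isLt; omega⟩)
    (Ar : Matrix (Fin d) (Fin d) ℝ)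
    (hAr : Ar = Matrix.of fun a b => ∑ k : Fin r,
      lam (Fin.castLE hrd k) * v (Fin.castLE hrd k) a * v (Fin.castLE hrd k) b)
    (eps tau kappa mu : ℝ)
    (heps : eps = matInfNorm (A - Ar))
    (htau : tau = matInfNorm E)
    (hkappa : kappa = Real.sqrt d * matMaxNorm (E * V))
    (hmu : mu = matCoherence V)
    (L₁ : Matrix (Fin r) (Fin r) ℝ) (hL₁ : L₁ = Lam₁ + Vᵀ * E * V)
    (L₂ : Matrix (Fin d) (Fin d) ℝ) (hL₂ : L₂ = Vp * (Lam₂ + Vpᵀ * E * Vp) * Vpᵀ)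
    : (∀ Q₀ : Matrix (Fin d) (Fin r) ℝ, matMaxNorm Q₀ = 1 →
        |lam (Fin.castLE hrd ⟨r - 1, by omega⟩)| - 3 * (r : ℝ) * mu * (tau + (r : ℝ) * kappa)
          - eps ≤ matMaxNorm (Q₀ * L₁ - L₂ * Q₀)) ∧
      (kappa * (r : ℝ) * Real.sqrt mu < |lam (Fin.castLE hrd ⟨r - 1, by omega⟩)| →
        IsUnit L₁.det) := by
  set W : Matrix (Fin d) (Fin d) ℝ := (of v)ᵀ
  have hW : Wᵀ * W = 1 := by
    ext i j
    simpa [W, mul_apply, one_apply] using hon i j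
  have hV' : V = W.submatrix id (Fin.castLE hrd) := hV
  have hVp' : Vp = W.submatrix id (Fin.natAddLE hrd) := hVp
  have hVV : Vᵀ * V = 1 := hV' ▸ Matrix.transpose_mul_submatrix_eq_one hW (Fin.castLE_injective hrd)
  have hproj : Vp * Vpᵀ = 1 - V * Vᵀ := hV' ▸ hVp' ▸ Matrix.submatrix_natAddLE_mul_transpose hrd hW
  have hA : A - Ar = Vp * Lam₂ * Vpᵀ := by
    have hAr' : Ar = V * Lam₁ * Vᵀ := by
      ext a b
      rw [hAr, hV, hLam₁, mul_apply]
      simp only [mul_diagonal, of_apply, transpose_apply]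
      exact Finset.sum_congr rfl fun k _ => by ring
    rw [hAr', hV', hVp', hLam₁, hLam₂]
    exact Matrix.sub_submatrix_castLE_eq_of_mulVec_eq_smul hrd (W := W) heig hW
  have hL₂' : L₂ = (A - Ar) + (1 - V * Vᵀ) * E * (1 - V * Vᵀ) := by
    rw [hL₂, hA, ← hproj]
    simp only [Matrix.mul_add, Matrix.add_mul, Matrix.mul_assoc]
  have hmono : ∀ k : Fin r, |lam (Fin.castLE hrd ⟨r - 1, by omega⟩)| ≤ |lam (Fin.castLE hrd k)| :=
    fun k => hdec _ _ (by simp only [Fin.le_def, Fin.val_castLE]; omega)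
  refine ⟨fun Q₀ hQ => ?_, fun hlt => ?_⟩
  · rw [hL₁, hLam₁, hL₂', heps, htau, hkappa, hmu]
    exact le_matMaxNorm_sylvester hVV hr.ne' hmono E (A - Ar) hQ
  · rw [hL₁, hLam₁]
    exact isUnit_det_diagonal_add_compress hVV hr.ne' hmono E (by rwa [hkappa, hmu] at hlt)
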